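/- The maximum over (λ,ν) with λ² ≤ ν and M₂(λ,ν) positive semidefinite of λ_⋆(λ,ν) := min_{X ≠ 0} (Xᵀ M₁(λ,ν) X)/(Xᵀ M₀(λ,ν) X), where M₀(λ,ν) = [[1,λ],[λ,ν]] and M₁(λ,ν) = [[1−λ, (1+λ−ν)/2],[(1+λ−ν)/2, λ]], is achieved at (λ,ν) = (1/2, 1) with value 1/2. -/

import Mathlib

open Matrix

/-- The matrix `M₀(λ,ν)`. -/
noncomputable def M0 (l v : ℝ) : Matrix (Fin 2) (Fin 2) ℝ := !![1, l; l, v]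

/-- The matrix `M₁(λ,ν)`. -/
noncomputable def M1 (l v : ℝ) : Matrix (Fin 2) (Fin 2) ℝ :=
  !![1 - l, (1 + l - v)/2; (1 + l - v)/2, l]

/-- The matrix `M₂(λ,ν)` depending on the parameter `κ`. -/
noncomputable def M2 (κ l v : ℝ) : Matrix (Fin 4) (Fin 4) ℝ :=
  !![1, l, -κ/2, -κ*l/2;
     l, v, -κ*l/2, -κ*v/2;
     -κ/2, -κ*l/2, 2*κ, 2*κ*l;
     -κ*l/2, -κ*v/2, 2*κ*l, 2*κ*v]

/-- `λ⋆(λ,ν) = min_{X ≠ 0} (Xᵀ M₁ X)/(Xᵀ M₀ X)`. -/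
noncomputable def lamStar (l v : ℝ) : ℝ :=
  sInf {r : ℝ | ∃ X : Fin 2 → ℝ, X ≠ 0 ∧
    r = (X ⬝ᵥ (M1 l v) *ᵥ X) / (X ⬝ᵥ (M0 l v) *ᵥ X)}
/-!
At `(1/2, 1)` one has `M₁ = M₀ / 2`, so every Rayleigh quotient equals `1/2`. For any other
`(λ, ν)` with `λ² ≤ ν`, a single test vector already has quotient at most `1/2`: `e₁` when
`λ ≥ 1/2`, and otherwise an adjugate column of `2 M₁ - M₀`, whose determinant is minus a sum of
squares. Positive semidefiniteness of `M₂(κ, 1/2, 1)` for `0 ≤ κ ≤ 8` is an explicit sum of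
squares.
-/

lemma dotProduct_M0_mulVec (l v : ℝ) (X : Fin 2 → ℝ) :
    X ⬝ᵥ M0 l v *ᵥ X = (X 0 + l * X 1) ^ 2 + (v - l ^ 2) * X 1 ^ 2 := by
  simp [M0, dotProduct, mulVec, Fin.sum_univ_two]; ring

lemma dotProduct_M1_mulVec (l v : ℝ) (X : Fin 2 → ℝ) :
    X ⬝ᵥ M1 l v *ᵥ X = (1 - l) * X 0 ^ 2 + (1 + l - v) * X 0 * X 1 + l * X 1 ^ 2 := by
  simp [M1, dotProduct, mulVec, Fin.sum_univ_two]; ring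

lemma dotProduct_M0_mulVec_nonneg {l v : ℝ} (h : l ^ 2 ≤ v) (X : Fin 2 → ℝ) :
    0 ≤ X ⬝ᵥ M0 l v *ᵥ X := by
  have := sub_nonneg.mpr h
  rw [dotProduct_M0_mulVec]
  positivity

lemma dotProduct_M0_mulVec_pos {l v : ℝ} (h : l ^ 2 < v) {X : Fin 2 → ℝ} (hX : X ≠ 0) :
    0 < X ⬝ᵥ M0 l v *ᵥ X := by
  rw [dotProduct_M0_mulVec]
  by_cases h1 : X 1 = 0
  · have h0 : X 0 ≠ 0 := fun h0 => hX (by ext i; fin_cases i <;> assumption)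
    simpa [h1] using pow_pos (abs_pos.mpr h0) 2
  · have := sub_pos.mpr h
    positivity

lemma M1_half_one : M1 (1/2) 1 = (1/2 : ℝ) • M0 (1/2) 1 := by
  ext i j; fin_cases i <;> fin_cases j <;> simp [M0, M1] <;> norm_num

lemma lamStar_half_one : lamStar (1/2) 1 = 1/2 := by
  suffices hset : {r : ℝ | ∃ X : Fin 2 → ℝ, X ≠ 0 ∧
      r = (X ⬝ᵥ (M1 (1/2) 1) *ᵥ X) / (X ⬝ᵥ (M0 (1/2) 1) *ᵥ X)} = {1/2} by
    rw [lamStar, hset, csInf_singleton]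
  refine Set.eq_singleton_iff_unique_mem.mpr ⟨⟨![1, 0], by simp, ?_⟩, ?_⟩
  · rw [dotProduct_M0_mulVec, dotProduct_M1_mulVec]; norm_num
  · rintro r ⟨X, hX, rfl⟩
    have hpos := dotProduct_M0_mulVec_pos (by norm_num : (1/2 : ℝ) ^ 2 < 1) hX
    rw [M1_half_one, smul_mulVec, dotProduct_smul, smul_eq_mul, mul_div_assoc,
      div_self hpos.ne', mul_one]

/-- The hypothesis `0 ≤ c` covers quotient sets that are unbounded below, whose `sInf` is the
junk value `0`. -/
lemma lamStar_le_of_exists_ratio_le {l v c : ℝ} (hc : 0 ≤ c)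
    (h : ∃ X : Fin 2 → ℝ, X ≠ 0 ∧ (X ⬝ᵥ M1 l v *ᵥ X) / (X ⬝ᵥ M0 l v *ᵥ X) ≤ c) :
    lamStar l v ≤ c := by
  obtain ⟨X, hX, hle⟩ := h
  by_cases hbdd : BddBelow {r : ℝ | ∃ X : Fin 2 → ℝ, X ≠ 0 ∧
      r = (X ⬝ᵥ (M1 l v) *ᵥ X) / (X ⬝ᵥ (M0 l v) *ᵥ X)}
  · exact (csInf_le hbdd ⟨X, hX, rfl⟩).trans hle
  · rwa [lamStar, Real.sInf_of_not_bddBelow hbdd]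

lemma exists_ratio_le_half {l v : ℝ} (hlv : l ^ 2 ≤ v) :
    ∃ X : Fin 2 → ℝ, X ≠ 0 ∧ (X ⬝ᵥ M1 l v *ᵥ X) / (X ⬝ᵥ M0 l v *ᵥ X) ≤ 1/2 := by
  rcases le_or_gt (1/2) l with hl | hl
  · refine ⟨![1, 0], by simp, ?_⟩
    rw [dotProduct_M0_mulVec, dotProduct_M1_mulVec]
    norm_num
    linarith
  · set X : Fin 2 → ℝ := ![v - 1, 1 - 2 * l]
    have hX : X ≠ 0 := fun h => by
      have := congrFun h 1
      simp [X] at this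
      linarith
    -- `X = adj (2 M₁ - M₀) e₂`, so the form of `2 M₁ - M₀` at `X` is `(1 - 2λ) det (2 M₁ - M₀)`.
    have hform : 2 * (X ⬝ᵥ M1 l v *ᵥ X) - X ⬝ᵥ M0 l v *ᵥ X
        = -(1 - 2 * l) * ((v - (1 + 2 * l) / 2) ^ 2 + 3 / 4 * (1 - 2 * l) ^ 2) := by
      rw [dotProduct_M0_mulVec, dotProduct_M1_mulVec]
      simp only [X, Matrix.cons_val_zero, Matrix.cons_val_one]
      ring
    have hneg : 0 ≤ (1 - 2 * l) * ((v - (1 + 2 * l) / 2) ^ 2 + 3 / 4 * (1 - 2 * l) ^ 2) :=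
      mul_nonneg (by linarith) (by positivity)
    exact ⟨X, hX, div_le_of_le_mul₀ (dotProduct_M0_mulVec_nonneg hlv X) (by norm_num)
      (by linarith)⟩

lemma posSemidef_M2_half_one {κ : ℝ} (hκ0 : 0 ≤ κ) (hκ8 : κ ≤ 8) :
    (M2 κ (1/2) 1).PosSemidef := by
  refine PosSemidef.of_dotProduct_mulVec_nonneg ?_ fun x => ?_
  · ext i j
    fin_cases i <;> fin_cases j <;> simp [M2, Matrix.conjTranspose_apply]
  · have hQ : star x ⬝ᵥ (M2 κ (1/2) 1) *ᵥ x =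
        (x 0 - κ / 2 * x 2 + (x 1 - κ / 2 * x 3) / 2) ^ 2 + 3 / 4 * (x 1 - κ / 2 * x 3) ^ 2
        + κ * (8 - κ) / 4 * ((x 2 + x 3 / 2) ^ 2 + 3 / 4 * x 3 ^ 2) := by
      simp [M2, dotProduct, mulVec, Fin.sum_univ_four]; ring
    have h8 : 0 ≤ 8 - κ := by linarith
    rw [hQ]
    positivity

theorem lamStar_max_at_half_one (κ : ℝ) (hκ0 : 0 ≤ κ) (hκ8 : κ ≤ 8) :
    lamStar (1/2) 1 = 1/2
      ∧ ((1/2 : ℝ)^2 ≤ 1 ∧ (M2 κ (1/2) 1).PosSemidef)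
      ∧ ∀ l v : ℝ, l^2 ≤ v → (M2 κ l v).PosSemidef → lamStar l v ≤ 1/2 :=
  ⟨lamStar_half_one, ⟨by norm_num, posSemidef_M2_half_one hκ0 hκ8⟩,
    fun _ _ hlv _ => lamStar_le_of_exists_ratio_le (by norm_num) (exists_ratio_le_half hlv)⟩
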